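/- arXiv:1310.1278 — 8 statements merged into one kernel-verified Lean document; each statement's English description precedes it below -/
import Mathlib

section
/- For all integers k > 0 and n > 0, log₂ C_k(n) > (n/k)^(k-1) · log₂(n/k), where C_k(n) is the index of Simon's congruence ∼ₙ over a k-letter alphabet and the right-hand side is computed over the reals. -/
/-- Simon's congruence: `x ∼ₙ y` iff `x` and `y` have the same subwords
(scattered subsequences) of length at most `n`. -/
def SimonCong {α : Type*} (n : ℕ) (x y : List α) : Prop :=
  ∀ w : List α, w.length ≤ n → (w.Sublist x ↔ w.Sublist y)

/-- Simon's congruence as a setoid on words over `α`. -/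
def simonSetoid (α : Type*) (n : ℕ) : Setoid (List α) :=
  ⟨SimonCong n,
    ⟨fun _ _ _ => Iff.rfl,
     fun h w hw => (h w hw).symm,
     fun h1 h2 w hw => (h1 w hw).trans (h2 w hw)⟩⟩

/-- `simonIndex k n` is `C_k(n)`, the number of equivalence classes of
Simon's congruence `∼ₙ` over a `k`-letter alphabet. -/
noncomputable def simonIndex (k n : ℕ) : ℕ :=
  Nat.card (Quotient (simonSetoid (Fin k) n))

/-
If `w₀, …, w_m` range over pairwise `∼ₚ`-inequivalent words over `k` letters, then the words
`w₀ b w₁ b ⋯ b w_m` over `k + 1` letters, with a fresh separator `b`, are pairwise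
`∼_{p+m}`-inequivalent: for `b`-free `u`, `u b^m` is a subword iff `u` is a subword of `w₀`, and
`b v` is a subword iff `v` is a subword of the tail `w₁ b ⋯ b w_m`. Hence
`C_k(p)^(m+1) ≤ C_{k+1}(p+m)`. Starting from `C_1(n) ≥ n + 1` and cutting `n` into
`⌈n / (k + 1)⌉` blocks at each step, induction on `k` gives the bound, because `x ↦ x^(k-1) log x`
is increasing for `x ≥ 1`. For `n < k` the right-hand side is negative.
-/

namespace List

variable {α : Type*} {b : α} {u v w z : List α}

theorem cons_sublist_append_cons_iff (hw : b ∉ w) : b :: v <+ w ++ b :: z ↔ v <+ z := by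
  refine ⟨fun h => ?_, fun h => (h.cons_cons b).trans (sublist_append_right w _)⟩
  obtain ⟨l₁, l₂, hl, h₁, h₂⟩ := sublist_append_iff.mp h
  cases l₁ with
  | nil => rw [nil_append] at hl; exact cons_sublist_cons.mp (hl ▸ h₂)
  | cons a l₁ =>
    obtain ⟨rfl, -⟩ := cons_eq_cons.mp hl
    exact absurd (h₁.subset mem_cons_self) hw

theorem append_replicate_sublist_append_cons_iff [DecidableEq α] (hw : b ∉ w) (hu : b ∉ u) :
    u ++ replicate (z.count b + 1) b <+ w ++ b :: z ↔ u <+ w := by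
  refine ⟨fun h => ?_, fun h => h.append (replicate_sublist_iff.mpr (by simp))⟩
  induction w generalizing u with
  | nil =>
    rcases sublist_cons_iff.mp h with h | ⟨r, hr, -⟩
    · have := h.count_le b
      simp [count_eq_zero_of_not_mem hu] at this
    · cases u with
      | nil => exact Sublist.refl _
      | cons a u => exact absurd (by simp_all) hu
  | cons a w ih =>
    rw [cons_append] at h
    rcases sublist_cons_iff.mp h with h | ⟨r, hr, h⟩
    · exact (ih (by simp_all) hu h).cons a
    · cases u with
      | nil => exact nil_sublist _
      | cons a' u =>
        obtain ⟨rfl, rfl⟩ := cons_eq_cons.mp hr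
        exact (ih (by simp_all) (by simp_all) h).cons_cons _

end List

namespace SimonCong

open List

variable {α β : Type*} {n : ℕ}

theorem of_map {f : α → β} (hf : Function.Injective f) {x y : List α}
    (h : SimonCong n (x.map f) (y.map f)) : SimonCong n x y := by
  intro w hw
  have hmap : ∀ l : List α, w.map f <+ l.map f ↔ w <+ l := fun l =>
    ⟨fun hl => by
      obtain ⟨w', hw', heq⟩ := sublist_map_iff.mp hl
      rwa [(map_injective_iff.mpr hf) heq], fun hl => hl.map f⟩
  rw [← hmap x, ← hmap y]
  exact h _ (by simpa using hw)

theorem of_append_cons [DecidableEq α] {b : α} {p : ℕ} {w₁ w₂ z₁ z₂ : List α}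
    (hw₁ : b ∉ w₁) (hw₂ : b ∉ w₂) (hz : z₁.count b = z₂.count b)
    (h : SimonCong (p + z₁.count b + 1) (w₁ ++ b :: z₁) (w₂ ++ b :: z₂)) :
    SimonCong p w₁ w₂ ∧ SimonCong (p + z₁.count b) z₁ z₂ := by
  constructor
  · intro u hu
    by_cases hbu : b ∈ u
    · exact iff_of_false (fun h₁ => hw₁ (h₁.subset hbu)) (fun h₂ => hw₂ (h₂.subset hbu))
    · rw [← append_replicate_sublist_append_cons_iff hw₁ hbu (z := z₁),
        ← append_replicate_sublist_append_cons_iff hw₂ hbu (z := z₂), ← hz]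
      exact h _ (by simp only [length_append, length_replicate]; omega)
  · intro v hv
    exact (cons_sublist_append_cons_iff hw₁).symm.trans
      ((h (b :: v) (by simp only [length_cons]; omega)).trans (cons_sublist_append_cons_iff hw₂))

end SimonCong

section SepJoin

open List

variable {α : Type*} (b : α)

def sepJoin : {m : ℕ} → (Fin (m + 1) → List α) → List α
  | 0, t => t 0
  | _ + 1, t => t 0 ++ b :: sepJoin (Fin.tail t)

variable {b} [DecidableEq α]

theorem count_sepJoin {m : ℕ} {t : Fin (m + 1) → List α} (ht : ∀ i, b ∉ t i) :
    (sepJoin b t).count b = m := by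
  induction m with
  | zero => exact count_eq_zero_of_not_mem (ht 0)
  | succ m ih =>
    rw [sepJoin, count_append, count_cons_self, count_eq_zero_of_not_mem (ht 0),
      ih (t := Fin.tail t) fun i => ht i.succ]
    omega

theorem SimonCong.of_sepJoin {p m : ℕ} {t t' : Fin (m + 1) → List α} (ht : ∀ i, b ∉ t i)
    (ht' : ∀ i, b ∉ t' i) (h : SimonCong (p + m) (sepJoin b t) (sepJoin b t'))
    (i : Fin (m + 1)) : SimonCong p (t i) (t' i) := by
  induction m with
  | zero => rwa [Fin.fin_one_eq_zero i]
  | succ m ih =>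
    have htail := count_sepJoin (t := Fin.tail t) fun i => ht i.succ
    have htail' := count_sepJoin (t := Fin.tail t') fun i => ht' i.succ
    have h' : SimonCong (p + (sepJoin b (Fin.tail t)).count b + 1)
        (t 0 ++ b :: sepJoin b (Fin.tail t)) (t' 0 ++ b :: sepJoin b (Fin.tail t')) := by
      rw [htail]; exact h
    obtain ⟨h₀, hrest⟩ := SimonCong.of_append_cons (ht 0) (ht' 0) (htail.trans htail'.symm) h'
    rw [htail] at hrest
    cases i using Fin.cases with
    | zero => exact h₀
    | succ i => exact ih (fun i => ht i.succ) (fun i => ht' i.succ) hrest i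

end SepJoin

instance {α : Type*} [Finite α] (n : ℕ) : Finite (Quotient (simonSetoid α n)) := by
  have : Finite {l : List α // l.length ≤ n} := (List.finite_length_le α n).to_subtype
  refine Finite.of_injective
    (fun c => c.lift (fun x (w : {l : List α // l.length ≤ n}) => w.1.Sublist x) ?_) ?_
  · intro x y h; funext w; exact propext (h w.1 w.2)
  · rintro ⟨x⟩ ⟨y⟩ h; exact Quotient.sound fun w hw => iff_of_eq (congrFun h ⟨w, hw⟩)

theorem simonIndex_pow_le (k p m : ℕ) :
    simonIndex k p ^ (m + 1) ≤ simonIndex (k + 1) (p + m) := by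
  let rep : Quotient (simonSetoid (Fin k) p) → List (Fin (k + 1)) := fun c => c.out.map Fin.succ
  have hrep : ∀ c, 0 ∉ rep c := fun c => by simp [rep, Fin.succ_ne_zero]
  let Φ : (Fin (m + 1) → Quotient (simonSetoid (Fin k) p)) →
      Quotient (simonSetoid (Fin (k + 1)) (p + m)) :=
    fun c => Quotient.mk _ (sepJoin 0 (rep ∘ c))
  have hΦ : Function.Injective Φ := fun c c' h => funext fun i =>
    Quotient.out_equiv_out.mp
      (((Quotient.exact h).of_sepJoin (fun i => hrep (c i)) (fun i => hrep (c' i)) i).of_map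
        (Fin.succ_injective k))
  calc simonIndex k p ^ (m + 1)
        = Nat.card (Fin (m + 1) → Quotient (simonSetoid (Fin k) p)) := by
          simp [simonIndex, Nat.card_fun]
    _ ≤ simonIndex (k + 1) (p + m) := Nat.card_le_card_of_injective Φ hΦ

theorem succ_le_simonIndex_one (n : ℕ) : n + 1 ≤ simonIndex 1 n := by
  let Φ : Fin (n + 1) → Quotient (simonSetoid (Fin 1) n) :=
    fun i => Quotient.mk _ (List.replicate i 0)
  have hle : ∀ i j, i ≤ n → SimonCong n (List.replicate i (0 : Fin 1)) (List.replicate j 0) →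
      i ≤ j := fun i j hi h =>
    (List.replicate_sublist_replicate 0).mp ((h _ (by simpa using hi)).mp (List.Sublist.refl _))
  have hΦ : Function.Injective Φ := fun i j h => by
    have h' := Quotient.exact h
    exact Fin.ext (le_antisymm (hle _ _ (by omega) h')
      (hle _ _ (by omega) fun w hw => (h' w hw).symm))
  simpa [simonIndex] using Nat.card_le_card_of_injective Φ hΦ

theorem simonIndex_pos (k n : ℕ) : 0 < simonIndex k n :=
  have : Nonempty (Quotient (simonSetoid (Fin k) n)) := ⟨Quotient.mk _ []⟩
  Nat.card_pos

open Real

theorem pow_mul_logb_le_pow_mul_logb {b : ℝ} (hb : 1 < b) (j : ℕ) {x y : ℝ} (hx : 1 ≤ x)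
    (hxy : x ≤ y) : x ^ j * logb b x ≤ y ^ j * logb b y :=
  mul_le_mul (pow_le_pow_left₀ (by linarith) hxy j) (logb_le_logb_of_le hb (by linarith) hxy)
    (logb_nonneg hb hx) (pow_nonneg (by linarith) j)

-- `m + 1 = ⌈n / (K + 1)⌉` blocks, so that `n / (K + 1) ≤ m + 1` and `n / (K + 1) ≤ p / K`.
theorem exists_balanced_split {K n : ℕ} (hK : 1 ≤ K) (hn : K + 1 ≤ n) :
    ∃ p m, n = p + m ∧ K ≤ p ∧ m * K ≤ p ∧ n ≤ (m + 1) * (K + 1) := by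
  set q := (n - 1) / (K + 1)
  have h₁ : q * (K + 1) ≤ n - 1 := Nat.div_mul_le_self (n - 1) (K + 1)
  have h₂ : n - 1 < q * (K + 1) + (K + 1) := Nat.lt_div_mul_add (Nat.succ_pos K)
  have hqK : q = 0 ∨ K ≤ q * K := by
    rcases Nat.eq_zero_or_pos q with hq | hq
    exacts [Or.inl hq, Or.inr (Nat.le_mul_of_pos_left K hq)]
  refine ⟨n - q, q, ?_, ?_, ?_, ?_⟩ <;> grind

theorem pow_mul_logb_lt_logb_simonIndex {K n : ℕ} (hK : 1 ≤ K) (hKn : K ≤ n) :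
    ((n : ℝ) / K) ^ (K - 1) * logb 2 ((n : ℝ) / K) < logb 2 (simonIndex K n) := by
  induction K, hK using Nat.le_induction generalizing n with
  | base =>
    have hn : (0 : ℝ) < n := by exact_mod_cast hKn
    calc ((n : ℝ) / (1 : ℕ)) ^ (1 - 1) * logb 2 ((n : ℝ) / (1 : ℕ)) = logb 2 n := by simp
      _ < logb 2 (n + 1 : ℕ) := logb_lt_logb one_lt_two hn (by push_cast; linarith)
      _ ≤ logb 2 (simonIndex 1 n) :=
        logb_le_logb_of_le one_lt_two (by positivity) (by exact_mod_cast succ_le_simonIndex_one n)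
  | succ K hK ih =>
    obtain ⟨p, m, rfl, hKp, hmp, hpm⟩ := exists_balanced_split hK hKn
    set s : ℝ := ((p + m : ℕ) : ℝ) / (K + 1 : ℕ)
    set t : ℝ := (p : ℝ) / K
    have hK₀ : (0 : ℝ) < K := by exact_mod_cast hK
    have hs : 1 ≤ s := by
      rw [one_le_div (by positivity)]; exact_mod_cast hKn
    have hst : s ≤ t := by
      rw [div_le_div_iff₀ (by positivity) hK₀]; push_cast
      have : (m : ℝ) * K ≤ p := by exact_mod_cast hmp
      nlinarith
    have hsm : s ≤ m + 1 := by
      rw [div_le_iff₀ (by positivity)]; exact_mod_cast hpm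
    have hpow : simonIndex K p ^ (m + 1) ≤ simonIndex (K + 1) (p + m) := simonIndex_pow_le K p m
    calc s ^ (K + 1 - 1) * logb 2 s = s * (s ^ (K - 1) * logb 2 s) := by
          rw [Nat.add_sub_cancel, ← mul_assoc, ← pow_succ', Nat.sub_add_cancel hK]
      _ ≤ (m + 1) * (t ^ (K - 1) * logb 2 t) :=
          mul_le_mul hsm (pow_mul_logb_le_pow_mul_logb one_lt_two _ hs hst)
            (mul_nonneg (by positivity) (logb_nonneg one_lt_two hs)) (by positivity)
      _ < (m + 1) * logb 2 (simonIndex K p) := by gcongr; exact ih hKp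
      _ = logb 2 ((simonIndex K p ^ (m + 1) : ℕ) : ℝ) := by
          push_cast; rw [logb_pow]; push_cast; ring
      _ ≤ logb 2 (simonIndex (K + 1) (p + m)) :=
          logb_le_logb_of_le one_lt_two (by exact_mod_cast pow_pos (simonIndex_pos K p) _)
            (by exact_mod_cast hpow)

theorem simon_index_lower_bound (k n : ℕ) (hk : 0 < k) (hn : 0 < n) :
    Real.logb 2 (simonIndex k n)
      > ((n : ℝ) / k) ^ (k - 1) * Real.logb 2 ((n : ℝ) / k) := by
  rcases le_or_gt k n with hkn | hnk
  · exact pow_mul_logb_lt_logb_simonIndex hk hkn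
  · have hpos : (0 : ℝ) < n / k := by positivity
    have hlt : (n : ℝ) / k < 1 := (div_lt_one (by positivity)).mpr (by exact_mod_cast hnk)
    calc ((n : ℝ) / k) ^ (k - 1) * logb 2 ((n : ℝ) / k) < 0 :=
          mul_neg_of_pos_of_neg (by positivity) (logb_neg one_lt_two hpos hlt)
      _ ≤ logb 2 (simonIndex k n) :=
          logb_nonneg one_lt_two (by exact_mod_cast simonIndex_pos k n)
end

section
/- Let A be a k-letter alphabet and let x₁, x₂, y, y′ be words over A. If x₁ is ℓ₁-rich, x₂ is ℓ₂-rich, and y ∼ₙ y′, then x₁ y x₂ ∼_{ℓ₁+n+ℓ₂} x₁ y′ x₂. -/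
/-- A word over the (finite) alphabet `α` is `ℓ`-rich if it has a prefix which is a
concatenation of `ℓ` rich factors (a factor is rich if every letter of the alphabet
occurs in it). Every word is `0`-rich. -/
def IsRich {α : Type*} [Fintype α] (ℓ : ℕ) (x : List α) : Prop :=
  ∃ xs : List (List α), ∃ z : List α,
    xs.length = ℓ ∧ (∀ w ∈ xs, ∀ a : α, a ∈ w) ∧ x = xs.flatten ++ z

private lemma flatten_sub {α : Type*} (xs : List (List α))
    (hxs : ∀ w ∈ xs, ∀ a : α, a ∈ w) :
    ∀ w : List α, w.length ≤ xs.length → w.Sublist xs.flatten := by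
  induction xs with
  | nil =>
    intro w hw
    have : w = [] := List.eq_nil_of_length_eq_zero (Nat.le_zero.mp hw)
    simp [this]
  | cons f xs ih =>
    intro w hw
    cases w with
    | nil => exact List.nil_sublist _
    | cons a w =>
      have h1 : [a].Sublist f := List.singleton_sublist.mpr (hxs f (by simp) a)
      have h2 : w.Sublist xs.flatten := by
        refine ih (fun g hg => hxs g (by simp [hg])) w ?_
        simpa using Nat.succ_le_succ_iff.mp hw
      simpa using h1.append h2

private lemma rich_sub {α : Type*} [Fintype α] {ℓ : ℕ} {x : List α}
    (hx : IsRich ℓ x) {w : List α} (hw : w.length ≤ ℓ) : w.Sublist x := by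
  obtain ⟨xs, z, hlen, hrich, rfl⟩ := hx
  exact (flatten_sub xs hrich w (by omega)).trans (List.sublist_append_left _ _)

private lemma key {α : Type*} [Fintype α] {ℓ₁ ℓ₂ n : ℕ}
    {x₁ x₂ y y' : List α}
    (h₁ : IsRich ℓ₁ x₁) (h₂ : IsRich ℓ₂ x₂)
    (h : ∀ w : List α, w.length ≤ n → w.Sublist y → w.Sublist y')
    (w : List α) (hw : w.length ≤ ℓ₁ + n + ℓ₂)
    (hsub : w.Sublist (x₁ ++ y ++ x₂)) : w.Sublist (x₁ ++ y' ++ x₂) := by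
  rw [List.append_assoc] at hsub ⊢
  obtain ⟨u, r, rfl, hu, hr⟩ := List.sublist_append_iff.mp hsub
  obtain ⟨v, t, rfl, hv, ht⟩ := List.sublist_append_iff.mp hr
  set a := min (ℓ₁ - u.length) v.length with ha
  set v₂ := v.drop a with hv₂
  set b := min (ℓ₂ - t.length) v₂.length with hb
  set m := v₂.length - b with hm
  have hlen : (u ++ (v ++ t)).length = u.length + v.length + t.length := by
    simp [List.length_append]; omega
  -- u₁ := u ++ v.take a is a sublist of x₁
  have hu₁ : (u ++ v.take a).Sublist x₁ := by
    by_cases hcase : u.length ≤ ℓ₁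
    · apply rich_sub h₁
      have : (v.take a).length ≤ a := by simp
      simp only [List.length_append]
      omega
    · have ha0 : a = 0 := by omega
      simpa [ha0] using hu
  -- t₁ := v₂.drop m ++ t is a sublist of x₂
  have ht₁ : (v₂.drop m ++ t).Sublist x₂ := by
    by_cases hcase : t.length ≤ ℓ₂
    · apply rich_sub h₂
      have hdl : (v₂.drop m).length = v₂.length - m := by simp
      simp only [List.length_append]
      omega
    · have hb0 : b = 0 := by omega
      have : m = v₂.length := by omega
      simp only [this, List.drop_length, List.nil_append]
      exact ht
  -- mid := v₂.take m is a sublist of y'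
  have hT : u.length + v.length + t.length ≤ ℓ₁ + n + ℓ₂ := by
    rw [hlen] at hw; exact hw
  have hmid : (v₂.take m).Sublist y' := by
    apply h
    · have h1 : (v₂.take m).length ≤ m := by simp
      have h2 : v₂.length = v.length - a := by simp [hv₂]
      omega
    · exact ((List.take_sublist m v₂).trans (List.drop_sublist a v)).trans hv
  -- reassemble
  have hdecomp : u ++ (v ++ t) = (u ++ v.take a) ++ ((v₂.take m) ++ (v₂.drop m ++ t)) := by
    simp only [hv₂]
    rw [← List.append_assoc (v.drop a |>.take m)]
    rw [List.take_append_drop m (v.drop a)]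
    rw [List.append_assoc u]
    rw [← List.append_assoc (v.take a)]
    rw [List.take_append_drop a v]
  rw [hdecomp]
  exact hu₁.append (hmid.append ht₁)

theorem simonCong_rich_context {α : Type*} [Fintype α] (ℓ₁ ℓ₂ n : ℕ)
    (x₁ x₂ y y' : List α)
    (h₁ : IsRich ℓ₁ x₁) (h₂ : IsRich ℓ₂ x₂) (h : SimonCong n y y') :
    SimonCong (ℓ₁ + n + ℓ₂) (x₁ ++ y ++ x₂) (x₁ ++ y' ++ x₂) := by
  intro w hw
  constructor
  · exact key h₁ h₂ (fun v hv => (h v hv).mp) w hw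
  · exact key h₁ h₂ (fun v hv => (h v hv).mpr) w hw
end

section
/- Let A be a k-letter alphabet, let m, n ∈ ℕ, let a₁, …, a_m ∈ A, and let x₁, …, x_m, x′₁, …, x′_m, y, y′ be words over A such that each of the factors x₁a₁, …, x_m a_m and x′₁a₁, …, x′_m a_m is rich. If y ∼ₙ y′ and xᵢ ∼_{n+1} x′ᵢ for all i = 1, …, m, then x₁ a₁ ⋯ x_m a_m y ∼_{n+m} x′₁ a₁ ⋯ x′_m a_m y′. -/
/-- A word of length at most the number of rich blocks embeds into the
concatenation of the blocks (followed by anything). -/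
private lemma absorb {α : Type*} :
    ∀ (L : List (List α)) (y w : List α), (∀ z ∈ L, ∀ b : α, b ∈ z) →
      w.length ≤ L.length → w.Sublist (L.flatten ++ y) := by
  intro L
  induction L with
  | nil =>
      intro y w _ hw
      have : w = [] := List.eq_nil_of_length_eq_zero (Nat.le_zero.mp hw)
      simp [this]
  | cons z L ih =>
      intro y w hrich hw
      match w with
      | [] => simp
      | b :: w =>
          have h1 : [b].Sublist z := List.singleton_sublist.mpr (hrich z (by simp) b)
          have h2 : w.Sublist (L.flatten ++ y) :=
            ih y w (fun z' hz' => hrich z' (by simp [hz'])) (by simpa using hw)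
          have := h1.append h2
          simpa using this

private lemma forall₂_right_mem {α β : Type*} {R : α → β → Prop} {Q : β → Prop}
    (hQ : ∀ a b, R a b → Q b) :
    ∀ {L : List α} {L' : List β}, List.Forall₂ R L L' → ∀ b ∈ L', Q b := by
  intro L L' h
  induction h with
  | nil => simp
  | cons h₁ _ ih =>
      intro b hb
      rcases List.mem_cons.mp hb with rfl | hb
      · exact hQ _ _ h₁
      · exact ih b hb

/-- The key one-sided transfer lemma. -/
private lemma key_s7 {α : Type*} (n : ℕ) (y y' : List α)
    (hy : ∀ v : List α, v.length ≤ n → v.Sublist y → v.Sublist y') :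
    ∀ {L L' : List (List α)},
      List.Forall₂ (fun z z' => (∀ b : α, b ∈ z) ∧ (∀ b : α, b ∈ z') ∧
        ∀ u : List α, u.length ≤ n + 1 → u.Sublist z → u.Sublist z') L L' →
      ∀ w : List α, w.length ≤ n + L.length → w.Sublist (L.flatten ++ y) →
        w.Sublist (L'.flatten ++ y') := by
  intro L L' h
  induction h with
  | nil =>
      intro w hlen hw
      exact hy w (by simpa using hlen) (by simpa using hw)
  | @cons z z' L L' hzz' hLL ih =>
      obtain ⟨hrz, hrz', htr⟩ := hzz'
      have hrichL' : ∀ z'' ∈ L', ∀ b : α, b ∈ z'' :=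
        forall₂_right_mem (fun a b hab => hab.2.1) hLL
      have hLL' : L.length = L'.length := hLL.length_eq
      intro w hlen hw
      rw [List.flatten_cons, List.append_assoc] at hw
      obtain ⟨u, r, heq, hu, hr⟩ := List.sublist_append_iff.mp hw
      -- ensure the head block consumes at least one letter (unless w is empty)
      obtain ⟨u, r, heq, hu, hr, hne⟩ :
          ∃ u r : List α, w = u ++ r ∧ u.Sublist z ∧ r.Sublist (L.flatten ++ y) ∧
            (w = [] ∨ u ≠ []) := by
        match u, heq with
        | [], heq =>
            match w, heq with
            | [], _ => exact ⟨[], [], by simp, List.nil_sublist _, List.nil_sublist _, Or.inl rfl⟩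
            | b :: w', heq =>
                have hrw : (b :: w').Sublist (L.flatten ++ y) := by
                  simp only [List.nil_append] at heq
                  rw [← heq] at hr; exact hr
                exact ⟨[b], w', rfl, List.singleton_sublist.mpr (hrz b),
                  (List.sublist_cons_self b w').trans hrw, Or.inr (by simp)⟩
        | c :: u', heq => exact ⟨c :: u', r, heq, hu, hr, Or.inr (by simp)⟩
      rcases hne with rfl | hne
      · exact List.nil_sublist _
      have hupos : 1 ≤ u.length := List.length_pos_iff.mpr hne
      have hlen' : u.length + r.length ≤ n + (L.length + 1) := by
        simpa [heq] using hlen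
      rw [List.flatten_cons, List.append_assoc]
      by_cases hcase : u.length ≤ n + 1
      · have hu' : u.Sublist z' := htr u hcase hu
        have hr' : r.Sublist (L'.flatten ++ y') :=
          ih r (by omega) hr
        rw [heq]
        exact hu'.append hr'
      · -- long head chunk: transfer a prefix of length n+1, absorb the rest
        push_neg at hcase
        set p := u.take (n + 1) with hp
        set q := u.drop (n + 1) with hq
        have hpz : p.Sublist z := (List.take_sublist _ _).trans hu
        have hp' : p.Sublist z' := htr p (by simp [hp]) hpz
        have hqlen : q.length = u.length - (n + 1) := by simp [hq]
        have habs : (q ++ r).Sublist (L'.flatten ++ y') := by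
          apply absorb L' y' (q ++ r) hrichL'
          simp only [List.length_append]
          omega
        have : (p ++ (q ++ r)).Sublist (z' ++ (L'.flatten ++ y')) :=
          hp'.append habs
        rw [heq, ← List.take_append_drop (n + 1) u, List.append_assoc]
        exact this

theorem simonCong_rich_factorization {α : Type*} [Fintype α] (m n : ℕ)
    (a : Fin m → α) (x x' : Fin m → List α) (y y' : List α)
    (hrich : ∀ i, ∀ b : α, b ∈ x i ++ [a i])
    (hrich' : ∀ i, ∀ b : α, b ∈ x' i ++ [a i])
    (hy : SimonCong n y y')
    (hx : ∀ i, SimonCong (n + 1) (x i) (x' i)) :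
    SimonCong (n + m) ((List.ofFn fun i => x i ++ [a i]).flatten ++ y)
      ((List.ofFn fun i => x' i ++ [a i]).flatten ++ y') := by
  -- chunk transfer in both directions
  have htrans : ∀ (i : Fin m) (u : List α), u.length ≤ n + 1 →
      (u.Sublist (x i ++ [a i]) ↔ u.Sublist (x' i ++ [a i])) := by
    intro i u hlen
    constructor <;> intro hu <;>
    · obtain ⟨u₁, u₂, rfl, h₁, h₂⟩ := List.sublist_append_iff.mp hu
      rcases List.sublist_singleton.mp h₂ with rfl | rfl
      · rw [List.append_nil]
        refine ((?_ : u₁.Sublist _)).trans (List.sublist_append_left _ _)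
        first
          | exact ((hx i) u₁ (by simpa using hlen)).mp h₁
          | exact ((hx i) u₁ (by simpa using hlen)).mpr h₁
      · refine List.Sublist.append ?_ (List.Sublist.refl _)
        first
          | exact ((hx i) u₁ (by simp at hlen; omega)).mp h₁
          | exact ((hx i) u₁ (by simp at hlen; omega)).mpr h₁
  have hfor : List.Forall₂ (fun z z' => (∀ b : α, b ∈ z) ∧ (∀ b : α, b ∈ z') ∧
        ∀ u : List α, u.length ≤ n + 1 → u.Sublist z → u.Sublist z')
      (List.ofFn fun i => x i ++ [a i]) (List.ofFn fun i => x' i ++ [a i]) := by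
    rw [List.forall₂_iff_get]
    refine ⟨by simp, ?_⟩
    intro i h₁ h₂
    simp only [List.get_ofFn]
    exact ⟨hrich _, hrich' _, fun u hl hu => (htrans _ u hl).mp hu⟩
  have hfor' : List.Forall₂ (fun z z' => (∀ b : α, b ∈ z) ∧ (∀ b : α, b ∈ z') ∧
        ∀ u : List α, u.length ≤ n + 1 → u.Sublist z → u.Sublist z')
      (List.ofFn fun i => x' i ++ [a i]) (List.ofFn fun i => x i ++ [a i]) := by
    rw [List.forall₂_iff_get]
    refine ⟨by simp, ?_⟩
    intro i h₁ h₂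
    simp only [List.get_ofFn]
    exact ⟨hrich' _, hrich _, fun u hl hu => (htrans _ u hl).mpr hu⟩
  intro w hlen
  constructor
  · exact key_s7 n y y' (fun v hv => (hy v hv).mp) hfor w (by simpa using hlen)
  · exact key_s7 n y' y (fun v hv => (hy v hv).mpr) hfor' w (by simpa using hlen)
end

section
/- For every integer k ≥ 2 and every integer n ≥ 0, C_k(n) ≤ 1 + Σ_{m=0}^{n−1} k^(m+1) · C_{k−1}(n−m+1)^m · C_{k−1}(n−m). -/
/-!
Cut a word into arches, `w = u₁a₁ ⋯ uₘaₘ v`, where `aᵢ ∉ uᵢ` while `uᵢ` contains every other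
letter, and `v` misses some letter `b` (any such factorization will do). A suffix made of `j`
arches contains every word of length `≤ j`, so all words with `m ≥ n` arches form a single
`∼ₙ`-class. For `m < n`, the class of `w` is determined by the letters `aᵢ` and `b`, the
`∼ₙ₋ₘ₊₁`-classes of the `uᵢ` over the alphabet without `aᵢ`, and the `∼ₙ₋ₘ`-class of `v` over the
alphabet without `b`: a subword of length `≤ n` is carried from `w` to `w'` arch by arch, its part
inside `uᵢaᵢ` via `uᵢ ∼ uᵢ'` as long as that part has at most `n - m + 1` letters, and once it is
longer, what remains is short enough to embed into the arches still to come. There are at most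
`k ^ (m + 1) * C_{k-1}(n - m + 1) ^ m * C_{k-1}(n - m)` such data.
-/

variable {α β : Type*}

namespace SimonCong

variable {n : ℕ} {x y : List α}

theorem symm (h : SimonCong n x y) : SimonCong n y x :=
  fun w hw => (h w hw).symm

theorem map (f : α → β) (h : SimonCong n x y) :
    SimonCong n (x.map f) (y.map f) := by
  suffices ∀ {x y : List α}, SimonCong n x y →
      ∀ w : List β, w.length ≤ n → w.Sublist (x.map f) → w.Sublist (y.map f) from
    fun w hw => ⟨this h w hw, this h.symm w hw⟩
  intro x y h w hw hwx
  obtain ⟨w', hw'x, rfl⟩ := List.sublist_map_iff.mp hwx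
  exact ((h w' (by simpa using hw)).mp hw'x).map f

theorem append_right (h : SimonCong n x y) (t : List α) :
    SimonCong n (x ++ t) (y ++ t) := by
  suffices ∀ {x y : List α}, SimonCong n x y →
      ∀ w : List α, w.length ≤ n → w.Sublist (x ++ t) → w.Sublist (y ++ t) from
    fun w hw => ⟨this h w hw, this h.symm w hw⟩
  intro x y h w hw hwx
  obtain ⟨w₁, w₂, rfl, hw₁, hw₂⟩ := List.sublist_append_iff.mp hwx
  exact ((h w₁ (by simp at hw; omega)).mp hw₁).append hw₂

end SimonCong

theorem simonCong_map_equiv_iff {n : ℕ} {x y : List α} (e : α ≃ β) :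
    SimonCong n (x.map e) (y.map e) ↔ SimonCong n x y := by
  refine ⟨fun h => ?_, SimonCong.map e⟩
  simpa [List.map_map] using h.map e.symm

instance finite_quotient_simonSetoid [Finite α] (n : ℕ) :
    Finite (Quotient (simonSetoid α n)) := by
  have : Finite {w : List α // w.length ≤ n} := (List.finite_length_le α n).to_subtype
  refine Finite.of_injective
    (fun q (w : {w : List α // w.length ≤ n}) => w.1.Sublist q.out) fun q q' h => ?_
  rw [← Quotient.out_eq q, ← Quotient.out_eq q']
  exact Quotient.sound fun w hw => by simpa using congrFun h ⟨w, hw⟩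

theorem card_quotient_simonSetoid [Fintype α] (n : ℕ) :
    Nat.card (Quotient (simonSetoid α n)) = simonIndex (Fintype.card α) n :=
  Nat.card_congr <| Quotient.congr (Equiv.listEquivOfEquiv (Fintype.equivFin α))
    fun _ _ => (simonCong_map_equiv_iff _).symm

def joinArches (bs : List (List α × α)) (v : List α) : List α :=
  bs.foldr (fun p w => p.1 ++ p.2 :: w) v

@[simp] theorem joinArches_nil (v : List α) : joinArches [] v = v := rfl

@[simp] theorem joinArches_cons (p : List α × α) (bs : List (List α × α)) (v : List α) :
    joinArches (p :: bs) v = p.1 ++ p.2 :: joinArches bs v := rfl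

theorem cons_sublist_append_cons {a c : α} {u s A : List α} (hc : c ≠ a → c ∈ u)
    (hs : s.Sublist A) : (c :: s).Sublist (u ++ a :: A) := by
  have : c ∈ u ++ [a] := by by_cases h : c = a <;> simp [h, hc]
  simpa using (List.singleton_sublist.2 this).append hs

theorem sublist_joinArches_of_length_le {bs : List (List α × α)} (v : List α)
    (hcov : ∀ p ∈ bs, ∀ b, b ≠ p.2 → b ∈ p.1) {s : List α} (hs : s.length ≤ bs.length) :
    s.Sublist (joinArches bs v) := by
  induction bs generalizing s with
  | nil => simp_all
  | cons p bs ih =>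
    obtain _ | ⟨c, s⟩ := s
    · exact List.nil_sublist _
    · simp only [List.length_cons, add_le_add_iff_right] at hs
      exact cons_sublist_append_cons (hcov p (by simp) c)
        (ih (fun p hp => hcov p (by simp [hp])) hs)

theorem sublist_append_cons_of_simonCong {L m : ℕ} {a : α} {u u' A A' : List α}
    (hu : SimonCong (L + 1) u u') (hcov : ∀ b, b ≠ a → b ∈ u')
    (hrich : ∀ s : List α, s.length ≤ m → s.Sublist A')
    (htail : ∀ s : List α, s.length ≤ L + m → s.Sublist A → s.Sublist A')
    {s : List α} (hs : s.length ≤ L + m + 1) (hsub : s.Sublist (u ++ a :: A)) :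
    s.Sublist (u' ++ a :: A') := by
  rw [← List.singleton_append, ← List.append_assoc] at hsub ⊢
  obtain ⟨q, r, rfl, hq, hr⟩ := List.sublist_append_iff.mp hsub
  simp only [List.length_append] at hs
  rcases lt_or_ge (L + 1) q.length with hlong | hshort
  · -- the first `L + 1` letters of `q` embed in `u' ++ [a]`, the others in the `m` arches of `A'`
    have hhead : (q.take (L + 1)).Sublist (u' ++ [a]) :=
      ((hu.append_right [a]) _ (by simp)).mp ((q.take_sublist _).trans hq)
    have hrest : (q.drop (L + 1) ++ r).Sublist A' := hrich _ (by simp; omega)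
    rw [← q.take_append_drop (L + 1), List.append_assoc]
    exact hhead.append hrest
  obtain _ | ⟨c, q⟩ := q
  · simp only [List.length_nil, zero_add, List.nil_append] at hs ⊢
    rcases le_or_gt r.length (L + m) with hr_short | hr_long
    · exact (htail r hr_short hr).trans (List.sublist_append_right _ _)
    obtain _ | ⟨c, r⟩ := r
    · simp at hr_long
    -- a word of full length `L + m + 1` inside `A`: its first letter lies in the arch `u' ++ [a]`
    simp only [List.length_cons] at hs
    simpa using cons_sublist_append_cons (hcov c)
      (htail r (by omega) ((r.sublist_cons_self c).trans hr))
  · exact ((hu.append_right [a]) _ hshort).mp hq |>.append (htail r (by simp at hs; omega) hr)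

theorem simonCong_joinArches {L : ℕ} {bs bs' : List (List α × α)} {v v' : List α}
    (hbs : List.Forall₂ (fun p p' => p.2 = p'.2 ∧ SimonCong (L + 1) p.1 p'.1) bs bs')
    (hcov : ∀ p ∈ bs, ∀ b, b ≠ p.2 → b ∈ p.1) (hcov' : ∀ p ∈ bs', ∀ b, b ≠ p.2 → b ∈ p.1)
    (hv : SimonCong L v v') :
    SimonCong (L + bs.length) (joinArches bs v) (joinArches bs' v') := by
  induction hbs with
  | nil => simpa using hv
  | @cons p p' bs bs' hp hbs ih =>
    obtain ⟨u, a⟩ := p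
    obtain ⟨u', a'⟩ := p'
    obtain ⟨rfl, hu⟩ := hp
    simp only [List.forall_mem_cons] at hcov hcov'
    have htail := ih hcov.2 hcov'.2
    intro s hs
    rw [List.length_cons, ← add_assoc] at hs
    exact ⟨sublist_append_cons_of_simonCong hu hcov'.1
        (fun _ h => sublist_joinArches_of_length_le v' hcov'.2 (hbs.length_eq ▸ h))
        (fun s h => (htail s h).mp) hs,
      sublist_append_cons_of_simonCong hu.symm hcov.1
        (fun _ h => sublist_joinArches_of_length_le v hcov.2 h)
        (fun s h => (htail s h).mpr) hs⟩

theorem exists_eq_append_cons_of_forall_mem [DecidableEq α] {S : Finset α} (hS : S.Nonempty) :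
    ∀ {w : List α}, (∀ b ∈ S, b ∈ w) →
      ∃ u a t, w = u ++ a :: t ∧ a ∈ S ∧ a ∉ u ∧ ∀ b ∈ S, b ≠ a → b ∈ u
  | [], hw => by obtain ⟨b, hb⟩ := hS; simpa using hw b hb
  | c :: w, hw => by
    by_cases hS' : (S.erase c).Nonempty
    · obtain ⟨u, a, t, rfl, haS, hau, hu⟩ := exists_eq_append_cons_of_forall_mem hS'
        (w := w) fun b hb => by
          obtain ⟨hbc, hbS⟩ := Finset.mem_erase.mp hb
          simpa [hbc] using hw b hbS
      obtain ⟨hac, haS⟩ := Finset.mem_erase.mp haS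
      refine ⟨c :: u, a, t, rfl, haS, by simp [hac, hau], fun b hb hba => ?_⟩
      by_cases hbc : b = c
      · simp [hbc]
      · exact List.mem_cons_of_mem _ (hu b (Finset.mem_erase.mpr ⟨hbc, hb⟩) hba)
    · have hSc : ∀ b ∈ S, b = c := fun b hb => by
        by_contra hbc
        exact hS' ⟨b, Finset.mem_erase.mpr ⟨hbc, hb⟩⟩
      obtain ⟨b, hb⟩ := hS
      exact ⟨[], c, w, rfl, hSc b hb ▸ hb, by simp, fun b hb hbc => absurd (hSc b hb) hbc⟩

structure ArchFactorization (w : List α) where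
  arches : List (List α × α)
  rest : List α
  missing : α
  eq_joinArches : w = joinArches arches rest
  not_mem_arch : ∀ p ∈ arches, p.2 ∉ p.1
  mem_arch : ∀ p ∈ arches, ∀ b, b ≠ p.2 → b ∈ p.1
  missing_not_mem : missing ∉ rest

theorem ArchFactorization.nonempty [Fintype α] [Nonempty α] (w : List α) :
    Nonempty (ArchFactorization w) := by
  classical
  induction h : w.length using Nat.strong_induction_on generalizing w with
  | _ N ih =>
  by_cases hw : ∀ b, b ∈ w
  · obtain ⟨u, a, t, rfl, -, hau, hu⟩ :=
      exists_eq_append_cons_of_forall_mem Finset.univ_nonempty fun b _ => hw b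
    obtain ⟨F⟩ := ih t.length (by simp [← h]; omega) t rfl
    exact ⟨⟨(u, a) :: F.arches, F.rest, F.missing, by simp [← F.eq_joinArches],
      List.forall_mem_cons.mpr ⟨hau, F.not_mem_arch⟩,
      List.forall_mem_cons.mpr ⟨fun b => hu b (Finset.mem_univ b), F.mem_arch⟩,
      F.missing_not_mem⟩⟩
  · obtain ⟨b, hb⟩ := not_forall.mp hw
    exact ⟨⟨[], w, b, rfl, by simp, by simp, hb⟩⟩

section Restrict

variable [DecidableEq α]

def restrictNe (a : α) (u : List α) : List {c // c ≠ a} :=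
  u.filterMap fun c => if h : c = a then none else some ⟨c, h⟩

theorem map_val_restrictNe {a : α} {u : List α} (h : a ∉ u) :
    (restrictNe a u).map Subtype.val = u := by
  induction u with
  | nil => rfl
  | cons c u ih =>
    simp only [List.mem_cons, not_or] at h
    simpa [restrictNe, Ne.symm h.1] using ih h.2

abbrev MarkedClass (α : Type*) (L : ℕ) : Type _ :=
  Σ a : α, Quotient (simonSetoid {c // c ≠ a} L)

def markedClass (L : ℕ) (p : List α × α) : MarkedClass α L :=
  ⟨p.2, Quotient.mk _ (restrictNe p.2 p.1)⟩

theorem eq_and_simonCong_of_markedClass_eq {L : ℕ} {p p' : List α × α} (hp : p.2 ∉ p.1)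
    (hp' : p'.2 ∉ p'.1) (h : markedClass L p = markedClass L p') :
    p.2 = p'.2 ∧ SimonCong L p.1 p'.1 := by
  obtain ⟨u, a⟩ := p
  obtain ⟨u', a'⟩ := p'
  obtain ⟨rfl, h⟩ := Sigma.mk.inj_iff.mp h
  refine ⟨rfl, ?_⟩
  have := (Quotient.exact (eq_of_heq h)).map Subtype.val
  rwa [map_val_restrictNe hp, map_val_restrictNe hp'] at this

theorem card_markedClass [Fintype α] (L : ℕ) :
    Nat.card (MarkedClass α L) = Fintype.card α * simonIndex (Fintype.card α - 1) L := by
  simp [Nat.card_sigma, card_quotient_simonSetoid]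

end Restrict

variable (α) in
abbrev ArchData (n m : ℕ) : Type _ :=
  (Fin m → MarkedClass α (n - m + 1)) × MarkedClass α (n - m)

theorem card_archData [Fintype α] (n m : ℕ) :
    Nat.card (ArchData α n m) = Fintype.card α ^ (m + 1) *
      simonIndex (Fintype.card α - 1) (n - m + 1) ^ m *
        simonIndex (Fintype.card α - 1) (n - m) := by
  classical
  simp only [Nat.card_prod, Nat.card_fun, card_markedClass, Nat.card_eq_fintype_card,
    Fintype.card_fin]
  ring

namespace ArchFactorization

variable {w w' : List α}

theorem sublist (F : ArchFactorization w) {s : List α} (hs : s.length ≤ F.arches.length) :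
    s.Sublist w :=
  F.eq_joinArches ▸ sublist_joinArches_of_length_le _ F.mem_arch hs

-- Meant for `m = F.arches.length`, when the default of `getD` is never used.
def data [DecidableEq α] (F : ArchFactorization w) (n m : ℕ) : ArchData α n m :=
  (fun i => markedClass (n - m + 1) (F.arches.getD i ([], F.missing)),
    markedClass (n - m) (F.rest, F.missing))

theorem simonCong_of_data_eq [DecidableEq α] {n m : ℕ} (hmn : m ≤ n)
    (F : ArchFactorization w) (F' : ArchFactorization w')
    (hm : F.arches.length = m) (hm' : F'.arches.length = m) (h : F.data n m = F'.data n m) :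
    SimonCong n w w' := by
  have harches : List.Forall₂ (fun p p' => p.2 = p'.2 ∧ SimonCong (n - m + 1) p.1 p'.1)
      F.arches F'.arches := by
    refine List.forall₂_iff_get.mpr ⟨hm.trans hm'.symm, fun i h₁ h₂ => ?_⟩
    refine eq_and_simonCong_of_markedClass_eq (F.not_mem_arch _ (List.get_mem _ _))
      (F'.not_mem_arch _ (List.get_mem _ _)) ?_
    simpa [data, List.getElem?_eq_getElem, h₁, h₂] using
      congrFun (congrArg Prod.fst h) ⟨i, hm ▸ h₁⟩
  obtain ⟨-, hrest⟩ := eq_and_simonCong_of_markedClass_eq F.missing_not_mem F'.missing_not_mem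
    (congrArg Prod.snd h)
  have := simonCong_joinArches harches F.mem_arch F'.mem_arch hrest
  rwa [hm, Nat.sub_add_cancel hmn, ← F.eq_joinArches, ← F'.eq_joinArches] at this

end ArchFactorization

section Counting

variable [Fintype α] [Nonempty α]

noncomputable def archFactorization (w : List α) : ArchFactorization w :=
  Classical.choice (ArchFactorization.nonempty w)

noncomputable def archLevel (n : ℕ) (w : List α) : Option (Fin n) :=
  if h : (archFactorization w).arches.length < n then some ⟨_, h⟩ else none

theorem sublist_of_archLevel_eq_none {n : ℕ} {w s : List α} (hw : archLevel n w = none)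
    (hs : s.length ≤ n) : s.Sublist w := by
  unfold archLevel at hw
  split_ifs at hw with h
  exact (archFactorization w).sublist (by omega)

theorem length_arches_of_archLevel_eq_some {n : ℕ} {w : List α} {m : Fin n}
    (hw : archLevel n w = some m) :
    (archFactorization w).arches.length = m := by
  unfold archLevel at hw
  split_ifs at hw
  cases hw
  rfl

theorem card_quotient_simonSetoid_le [DecidableEq α] (n : ℕ) :
    Nat.card (Quotient (simonSetoid α n)) ≤ 1 + ∑ m ∈ Finset.range n,
      Fintype.card α ^ (m + 1) * simonIndex (Fintype.card α - 1) (n - m + 1) ^ m *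
        simonIndex (Fintype.card α - 1) (n - m) := by
  let encode (q : Quotient (simonSetoid α n)) : Option (Σ m : Fin n, ArchData α n m) :=
    (archLevel n q.out).map fun m => ⟨m, (archFactorization q.out).data n m⟩
  have hinj : Function.Injective encode := by
    intro q q' h
    rw [← Quotient.out_eq q, ← Quotient.out_eq q']
    apply Quotient.sound
    cases hq : archLevel n q.out <;> cases hq' : archLevel n q'.out <;>
      simp only [encode, hq, hq', Option.map_none, Option.map_some, reduceCtorEq,
        Option.some.injEq, Sigma.mk.injEq] at h
    · exact fun s hs =>
        iff_of_true (sublist_of_archLevel_eq_none hq hs) (sublist_of_archLevel_eq_none hq' hs)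
    · obtain ⟨rfl, h⟩ := h
      exact ArchFactorization.simonCong_of_data_eq Fin.is_le' _ _
        (length_arches_of_archLevel_eq_some hq) (length_arches_of_archLevel_eq_some hq')
        (eq_of_heq h)
  calc Nat.card (Quotient (simonSetoid α n))
      ≤ Nat.card (Option (Σ m : Fin n, ArchData α n m)) := Nat.card_le_card_of_injective _ hinj
    _ = 1 + ∑ m : Fin n, Nat.card (ArchData α n m) := by
      rw [Finite.card_option, Nat.card_sigma, add_comm]
    _ = _ := by
      rw [Fin.sum_univ_eq_sum_range (fun m => Nat.card (ArchData α n m))]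
      simp only [card_archData]

end Counting

theorem simon_index_le_sum (k n : ℕ) (hk : 2 ≤ k) :
    simonIndex k n ≤ 1 + ∑ m ∈ Finset.range n,
      k ^ (m + 1) * simonIndex (k - 1) (n - m + 1) ^ m * simonIndex (k - 1) (n - m) := by
  have : NeZero k := ⟨by omega⟩
  simpa only [card_quotient_simonSetoid, Fintype.card_fin] using
    card_quotient_simonSetoid_le (α := Fin k) n
end

section
/- For every integer n ≥ 2, the index of Simon's congruence over a two-letter alphabet satisfies C₂(n) ≤ 2 · Σ_{m=0}^{2n−1} n^m = 2·(n^(2n) − 1)/(n − 1). -/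
/-!
A word over `{0, 1}` is determined by its first letter and the lengths of its maximal runs.
Shortening a run of length `≥ n` to length `n` does not change the subwords of length `≤ n`,
and a word with at least `2 n` runs contains the alternating word of length `2 n`, hence every
word of length `≤ n`. So every class of `∼ₙ` contains the empty word, the alternating word of
length `2 n`, or a word with `k ∈ [1, 2 n)` runs of lengths in `[1, n]`; there are
`2 + 2 ∑_{1 ≤ k < 2n} n ^ k = 2 ∑_{k < 2n} n ^ k` such words.
-/

namespace SimonCong

variable {α : Type*} {n : ℕ}

theorem append {x y u v : List α} (hxy : SimonCong n x y) (huv : SimonCong n u v) :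
    SimonCong n (x ++ u) (y ++ v) := by
  intro w hw
  simp only [List.sublist_append_iff]
  constructor
  all_goals
    rintro ⟨w₁, w₂, rfl, h₁, h₂⟩
    simp only [List.length_append] at hw
  · exact ⟨w₁, w₂, rfl, (hxy w₁ (by omega)).mp h₁, (huv w₂ (by omega)).mp h₂⟩
  · exact ⟨w₁, w₂, rfl, (hxy w₁ (by omega)).mpr h₁, (huv w₂ (by omega)).mpr h₂⟩

theorem replicate_of_min_eq {m m' : ℕ} (h : min m n = min m' n) (c : α) :
    SimonCong n (List.replicate m c) (List.replicate m' c) := by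
  intro w hw
  simp only [List.sublist_replicate_iff]
  constructor
  all_goals
    rintro ⟨k, hk, rfl⟩
    simp only [List.length_replicate] at hw
    exact ⟨k, by omega, rfl⟩

end SimonCong

theorem fin_two_add_one_add_one : ∀ c : Fin 2, c + 1 + 1 = c := by decide

theorem fin_two_eq_add_one_of_ne : ∀ {c d : Fin 2}, d ≠ c → d = c + 1 := by decide

def alternating : Fin 2 → ℕ → List (Fin 2)
  | _, 0 => []
  | c, k + 1 => c :: alternating (c + 1) k

theorem alternating_two_mul_succ (c : Fin 2) (m : ℕ) :
    alternating c (2 * (m + 1)) = c :: (c + 1) :: alternating c (2 * m) := by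
  rw [Nat.mul_succ, alternating, alternating, fin_two_add_one_add_one]

theorem sublist_alternating_two_mul :
    ∀ {m : ℕ} {w : List (Fin 2)} (c : Fin 2), w.length ≤ m →
      w.Sublist (alternating c (2 * m))
  | _, [], _, _ => List.nil_sublist _
  | m + 1, d :: w, c, hw => by
      have hw' : w.length ≤ m := by simpa using hw
      rw [alternating_two_mul_succ]
      by_cases hd : d = c
      · subst hd
        exact ((sublist_alternating_two_mul d hw').cons _).cons_cons _
      · rw [fin_two_eq_add_one_of_ne hd]
        exact ((sublist_alternating_two_mul c hw').cons_cons _).cons _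

/-- The word starting with the letter `c` whose `i`-th maximal run has length `ls[i] + 1`. -/
def fromRuns : Fin 2 → List ℕ → List (Fin 2)
  | _, [] => []
  | c, l :: ls => List.replicate (l + 1) c ++ fromRuns (c + 1) ls

theorem exists_fromRuns_eq : ∀ x : List (Fin 2), ∃ c ls, fromRuns c ls = x
  | [] => ⟨0, [], rfl⟩
  | a :: t => by
      obtain ⟨c, ls, rfl⟩ := exists_fromRuns_eq t
      match ls with
      | [] => exact ⟨a, [0], rfl⟩
      | l :: ls =>
        by_cases hc : a = c
        · subst hc
          exact ⟨a, (l + 1) :: ls, by simp [fromRuns, List.replicate_succ]⟩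
        · obtain rfl := fin_two_eq_add_one_of_ne (Ne.symm hc)
          exact ⟨a, 0 :: l :: ls, rfl⟩

theorem alternating_sublist_fromRuns :
    ∀ {k : ℕ} (c : Fin 2) {ls : List ℕ}, k ≤ ls.length →
      (alternating c k).Sublist (fromRuns c ls)
  | 0, _, _, _ => List.nil_sublist _
  | k + 1, c, l :: ls, hk => by
      have hc : [c].Sublist (List.replicate (l + 1) c) := by simp
      exact hc.append (alternating_sublist_fromRuns (c + 1) (by simpa using hk))

theorem simonCong_fromRuns_alternating {n : ℕ} (c : Fin 2) {ls : List ℕ}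
    (hls : 2 * n ≤ ls.length) :
    SimonCong n (fromRuns c ls) (alternating 0 (2 * n)) := fun _ hw =>
  iff_of_true ((sublist_alternating_two_mul c hw).trans (alternating_sublist_fromRuns c hls))
    (sublist_alternating_two_mul 0 hw)

theorem simonCong_fromRuns_map_min (n : ℕ) :
    ∀ (c : Fin 2) (ls : List ℕ),
      SimonCong n (fromRuns c ls) (fromRuns c (ls.map (min · (n - 1))))
  | _, [] => fun _ _ => Iff.rfl
  | c, l :: ls =>
      SimonCong.append (SimonCong.replicate_of_min_eq (by dsimp only; omega) c)
        (simonCong_fromRuns_map_min n (c + 1) ls)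

/-- `(c, k, f)` codes the word with first letter `c` and `k` runs of lengths `f i + 1`. -/
abbrev RunCode (n : ℕ) : Type := Fin 2 × Σ k : Fin (2 * n), (Fin k → Fin n)

theorem card_runCode (n : ℕ) :
    Nat.card (RunCode n) = 2 * ∑ m ∈ Finset.range (2 * n), n ^ m := by
  simp [Nat.card_eq_fintype_card, Fintype.card_sigma, Fin.sum_univ_eq_sum_range (n ^ ·)]

/-- Both codes without runs would describe the empty word, so one of them is used for the
class of the words with at least `2 n` runs. -/
def RunCode.word (n : ℕ) : RunCode n → List (Fin 2)
  | (c, ⟨k, f⟩) =>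
    if c = 1 ∧ (k : ℕ) = 0 then alternating 0 (2 * n)
    else fromRuns c (List.ofFn fun i => (f i : ℕ))

theorem RunCode.surjective_mk_word {n : ℕ} (hn : 1 ≤ n) :
    Function.Surjective fun e : RunCode n =>
      (⟦e.word n⟧ : Quotient (simonSetoid (Fin 2) n)) := by
  intro q
  induction q using Quotient.ind with
  | _ x =>
  obtain ⟨c, ls, rfl⟩ := exists_fromRuns_eq x
  by_cases hlong : 2 * n ≤ ls.length
  · refine ⟨(1, ⟨⟨0, by omega⟩, Fin.elim0⟩), Quotient.sound ?_⟩
    simpa [RunCode.word] using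
      (simonSetoid (Fin 2) n).symm (simonCong_fromRuns_alternating c hlong)
  by_cases hempty : c = 1 ∧ ls = []
  · obtain ⟨rfl, rfl⟩ := hempty
    exact ⟨(0, ⟨⟨0, by omega⟩, Fin.elim0⟩), rfl⟩
  let e : RunCode n :=
    (c, ⟨⟨ls.length, by omega⟩, fun i => ⟨min ls[i] (n - 1), by omega⟩⟩)
  have hword : e.word n = fromRuns c (ls.map (min · (n - 1))) := by
    rw [RunCode.word, if_neg (by simpa [List.length_eq_zero_iff] using hempty)]
    exact congrArg _ (List.ofFn_getElem_eq_map ls (min · (n - 1)))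
  refine ⟨e, Quotient.sound ?_⟩
  exact hword ▸ (simonSetoid (Fin 2) n).symm (simonCong_fromRuns_map_min n c ls)

theorem simon_index_two_letters (n : ℕ) (hn : 2 ≤ n) :
    simonIndex 2 n ≤ 2 * ∑ m ∈ Finset.range (2 * n), n ^ m ∧
      2 * ∑ m ∈ Finset.range (2 * n), n ^ m = 2 * ((n ^ (2 * n) - 1) / (n - 1)) := by
  refine ⟨?_, by rw [Nat.geomSum_eq hn]⟩
  calc simonIndex 2 n ≤ Nat.card (RunCode n) :=
        Nat.card_le_card_of_surjective _ (RunCode.surjective_mk_word (by omega))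
    _ = 2 * ∑ m ∈ Finset.range (2 * n), n ^ m := card_runCode n
end

section
/- Let k ≥ 1 be an integer and let A be a k-letter alphabet. If a word x over A is n-rich, then every word over A of length at most n is a subword of x; consequently, any two n-rich words over A are ∼ₙ-equivalent. -/
lemma aux_sublist_flatten {α : Type*} :
    ∀ (xs : List (List α)) (w : List α), (∀ u ∈ xs, ∀ a : α, a ∈ u) →
      w.length ≤ xs.length → w.Sublist xs.flatten := by
  intro xs
  induction xs with
  | nil =>
    intro w _ hlen
    simp at hlen
    simp [hlen]
  | cons u xs ih =>
    intro w hrich hlen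
    cases w with
    | nil => exact List.nil_sublist _
    | cons a w =>
      simp only [List.flatten_cons]
      have h1 : [a].Sublist u := List.singleton_sublist.mpr (hrich u (by simp) a)
      have h2 : w.Sublist xs.flatten := by
        apply ih w (fun v hv => hrich v (by simp [hv]))
        simpa using Nat.succ_le_succ_iff.mp hlen
      simpa using List.Sublist.append h1 h2

theorem rich_words_simonCong {α : Type*} [Fintype α] (k : ℕ) (hk : 1 ≤ k)
    (hcard : Fintype.card α = k) (n : ℕ) :
    (∀ x : List α, IsRich n x → ∀ w : List α, w.length ≤ n → w.Sublist x) ∧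
      (∀ x y : List α, IsRich n x → IsRich n y → SimonCong n x y) := by
  have main : ∀ x : List α, IsRich n x → ∀ w : List α, w.length ≤ n → w.Sublist x := by
    rintro x ⟨xs, z, hlen, hrich, rfl⟩ w hw
    exact (aux_sublist_flatten xs w hrich (hw.trans hlen.ge)).trans
      (List.sublist_append_left _ _)
  refine ⟨main, fun x y hx hy w hw => ⟨fun _ => main y hy w hw, fun _ => main x hx w hw⟩⟩
end

section
/- Let k ≥ 1 be an integer and let x, y be real numbers with x ≥ 0 and 0 ≤ y ≤ x. Then (y + 1) · ((x − y + 2k)/k)^k ≤ ((x + 2k + 1)/(k + 1))^(k+1). -/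
theorem G_le_F (k : ℕ) (hk : 1 ≤ k) (x y : ℝ) (hx : 0 ≤ x) (hy : 0 ≤ y) (hyx : y ≤ x) :
    (y + 1) * ((x - y + 2 * k) / k) ^ k ≤ ((x + 2 * k + 1) / (k + 1)) ^ (k + 1) := by
  have hK : (0:ℝ) < (k:ℝ) := by exact_mod_cast hk
  set p₁ : ℝ := y + 1 with hp₁def
  set p₂ : ℝ := (x - y + 2 * k) / k with hp₂def
  have hp₁ : (0:ℝ) ≤ p₁ := by simp [hp₁def]; linarith
  have hp₂ : (0:ℝ) ≤ p₂ := by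
    apply div_nonneg _ hK.le
    linarith
  have hw : (1:ℝ)/(k+1) + (k:ℝ)/(k+1) = 1 := by field_simp; ring
  have h := Real.geom_mean_le_arith_mean2_weighted (by positivity) (by positivity) hp₁ hp₂ hw
  have hR : (1:ℝ)/(k+1) * p₁ + (k:ℝ)/(k+1) * p₂ = (x + 2*k + 1)/(k+1) := by
    simp only [hp₁def, hp₂def]
    field_simp
    ring
  rw [hR] at h
  have hpow := Real.rpow_le_rpow (by positivity) h (by positivity : (0:ℝ) ≤ (k:ℝ)+1)
  have hL : (p₁ ^ ((1:ℝ)/(k+1)) * p₂ ^ ((k:ℝ)/(k+1))) ^ ((k:ℝ)+1) = p₁ * p₂ ^ k := by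
    rw [Real.mul_rpow (by positivity) (by positivity), ← Real.rpow_natCast p₂ k,
      ← Real.rpow_mul hp₁, ← Real.rpow_mul hp₂]
    have h1 : (1:ℝ)/(k+1) * ((k:ℝ)+1) = 1 := by field_simp
    have h2 : (k:ℝ)/(k+1) * ((k:ℝ)+1) = k := by field_simp
    rw [h1, h2, Real.rpow_one]
  rw [hL] at hpow
  calc p₁ * p₂ ^ k ≤ ((x + 2*k + 1)/(k+1)) ^ ((k:ℝ)+1) := hpow
    _ = ((x + 2*k + 1)/(k+1)) ^ (k+1) := by
        rw [← Real.rpow_natCast _ (k+1)]; push_cast; ring_nf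
end

section
/- For all integers n ≥ 2 and k ≥ 2 and every integer m with 0 ≤ m ≤ n − 1, the real-number inequality (m + 1) · ((n − m + 2k − 2)/(k − 1))^(k−1) ≤ ((n + 2k − 1)/k)^k holds. -/
/-! The estimate is AM-GM for the `k` numbers `m + 1, b, …, b` with
`b = (n - m + 2k - 2) / (k - 1)`, whose sum is `n + 2k - 1`. That instance of AM-GM follows from
Bernoulli's inequality applied to `c / b`, where `c` is the arithmetic mean. -/

theorem mul_pow_le_arith_mean_pow {α : Type*} [Field α] [LinearOrder α] [IsStrictOrderedRing α]
    {a b : α} (ha : 0 ≤ a) (hb : 0 < b) (k : ℕ) :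
    a * b ^ k ≤ ((a + k * b) / (k + 1)) ^ (k + 1) := by
  set c := (a + k * b) / (k + 1)
  have hc : 0 ≤ c := by positivity
  have bernoulli := one_add_mul_sub_le_pow (by linarith [div_nonneg hc hb.le] : -1 ≤ c / b) (k + 1)
  have hbernoulli : 1 + ((k + 1 : ℕ) : α) * (c / b - 1) = a / b := by
    simp only [c]
    field_simp
    push_cast
    ring
  calc a * b ^ k = a / b * b ^ (k + 1) := by field_simp; ring
    _ ≤ (c / b) ^ (k + 1) * b ^ (k + 1) := by
      rw [← hbernoulli]
      exact mul_le_mul_of_nonneg_right bernoulli (by positivity)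
    _ = c ^ (k + 1) := by rw [← mul_pow, div_mul_cancel₀ c hb.ne']

theorem key_inequality_general (n k m : ℕ) (hk : 2 ≤ k) (hm : m ≤ n - 1) :
    ((m : ℝ) + 1) * (((n : ℝ) - m + 2 * k - 2) / ((k : ℝ) - 1)) ^ (k - 1)
      ≤ (((n : ℝ) + 2 * k - 1) / (k : ℝ)) ^ k := by
  have hk' : (2 : ℝ) ≤ k := by exact_mod_cast hk
  have hmn : (m : ℝ) ≤ n := by exact_mod_cast (by omega : m ≤ n)
  have hk_pred : ((k - 1 : ℕ) : ℝ) = k - 1 := Nat.cast_pred (by omega)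
  have hb : 0 < ((n : ℝ) - m + 2 * k - 2) / ((k : ℝ) - 1) := by
    apply div_pos <;> linarith
  have hmean : ((m : ℝ) + 1 + (k - 1) * (((n : ℝ) - m + 2 * k - 2) / ((k : ℝ) - 1))) / (k - 1 + 1)
      = ((n : ℝ) + 2 * k - 1) / k := by
    have : (k : ℝ) - 1 ≠ 0 := by linarith
    rw [sub_add_cancel, mul_div_cancel₀ _ this]
    ring
  have amgm := mul_pow_le_arith_mean_pow (a := (m : ℝ) + 1) (by positivity) hb (k - 1)
  rwa [Nat.sub_add_cancel (by omega), hk_pred, hmean] at amgm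

theorem key_inequality (n k m : ℕ) (hn : 2 ≤ n) (hk : 2 ≤ k) (hm : m ≤ n - 1) :
    ((m : ℝ) + 1) * (((n : ℝ) - m + 2 * k - 2) / ((k : ℝ) - 1)) ^ (k - 1)
      ≤ (((n : ℝ) + 2 * k - 1) / (k : ℝ)) ^ k :=
  key_inequality_general n k m hk hm
end
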